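/- arXiv:math/0604309 — 2 statements merged into one kernel-verified Lean document; each statement's English description precedes it below -/
import Mathlib

section
/- Let f be a quasiperiodically forced monotone interval map (fibers f_θ : [a,b] → [a,b] monotone increasing) over an irrational rotation, and let 𝒜 ⊆ 𝕋¹ × [a,b] be a compact invariant set without isolated points such that f|_𝒜 is transitive and supports a fully-supported finite invariant measure. Then either f|_𝒜 has sensitive dependence on initial conditions, or 𝒜 is the graph of a continuous function. -/
/-!
If `f|A` is not sensitive, the transitive point `x` is an equicontinuity point of the iterates.
The invariant measure of full support makes the return times of every open set syndetic (along a
sequence avoiding them, the preimages of the set would be disjoint with equal positive measure),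
so `x` is uniformly recurrent. Hence every orbit visits each neighbourhood of `x`, the iterates are
equicontinuous everywhere, and `f|A` is minimal; being a uniformly equicontinuous surjection, it
has iterates uniformly close to the identity, so it is distal.

All fibres of `A` are nonempty since the irrational rotation is minimal, and monotonicity makes
the graphs of the fibrewise maximum and minimum invariant. By minimality the top point over `θ`
comes near the bottom point over `θ`, and lower semicontinuity of the bottom graph then makes the
two orbits proximal, which distality forbids unless they coincide. So `A` is the graph of a
function that is both upper and lower semicontinuous.
-/

open MeasureTheory Filter Topology Set Function

def IsSyndetic (S : Set ℕ) : Prop :=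
  ∃ K, ∀ m, ∃ n ∈ S, m ≤ n ∧ n ≤ m + K

lemma IsSyndetic.mono {S S' : Set ℕ} (h : IsSyndetic S) (hSS' : S ⊆ S') : IsSyndetic S' := by
  obtain ⟨K, hK⟩ := h
  exact ⟨K, fun m => let ⟨n, hn, hmn⟩ := hK m; ⟨n, hSS' hn, hmn⟩⟩

lemma exists_strictMono_sub_notMem_of_not_isSyndetic {S : Set ℕ} (hS : ¬ IsSyndetic S) :
    ∃ b : ℕ → ℕ, StrictMono b ∧ ∀ i j, i < j → b j - b i ∉ S := by
  simp only [IsSyndetic, not_exists, not_forall] at hS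
  choose g hg using hS
  -- `b (k + 1) - b i` lies in the gap `[g (b k + 1), g (b k + 1) + b k + 1]` of `S` for all `i ≤ k`
  let b : ℕ → ℕ := fun k => Nat.rec 0 (fun _ prev => g (prev + 1) + prev + 1) k
  have hb : ∀ k, b (k + 1) = g (b k + 1) + b k + 1 := fun _ => rfl
  have hmono : StrictMono b := strictMono_nat_of_lt_succ fun k => by rw [hb]; omega
  refine ⟨b, hmono, fun i j hij hmem => ?_⟩
  obtain ⟨k, rfl⟩ : ∃ k, j = k + 1 := ⟨j - 1, by omega⟩
  have hik : b i ≤ b k := hmono.monotone (Nat.lt_succ_iff.mp hij)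
  exact hg (b k + 1) _ ⟨hmem, by rw [hb]; omega, by rw [hb]; omega⟩

theorem MeasureTheory.MeasurePreserving.isSyndetic_inter_preimage_iterate_nonempty
    {α : Type*} [MeasurableSpace α] {μ : Measure α} [IsFiniteMeasure μ] {T : α → α}
    (hT : MeasurePreserving T μ μ) {s : Set α} (hs : NullMeasurableSet s μ) (hμs : μ s ≠ 0) :
    IsSyndetic {n | (s ∩ T^[n] ⁻¹' s).Nonempty} := by
  by_contra hS
  obtain ⟨b, hb, hbS⟩ := exists_strictMono_sub_notMem_of_not_isSyndetic hS
  obtain ⟨k, hk⟩ := ENNReal.exists_nat_mul_gt hμs (measure_ne_top μ univ)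
  obtain ⟨i, -, j, -, hij, x, hxi, hxj⟩ := exists_nonempty_inter_of_measure_univ_lt_sum_measure μ
    (s := Finset.range k) (t := fun i => T^[b i] ⁻¹' s)
    (fun i _ => hs.preimage (hT.iterate _).quasiMeasurePreserving)
    (by simpa [(hT.iterate _).measure_preimage hs] using hk)
  have key : ∀ i j, i < j → x ∈ T^[b i] ⁻¹' s → x ∈ T^[b j] ⁻¹' s → False := fun i j h hi hj =>
    hbS i j h ⟨T^[b i] x, hi, by
      rwa [mem_preimage, ← iterate_add_apply, Nat.sub_add_cancel (hb h).le]⟩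
  rcases hij.lt_or_gt with h | h
  · exact key i j h hxi hxj
  · exact key j i h hxj hxi

theorem AddCircle.eq_univ_of_isClosed_of_image_add_eq {p ω : ℝ} (hω : Irrational (ω / p))
    {C : Set (AddCircle p)} (hC : IsClosed C) (hne : C.Nonempty)
    (hCω : (· + (ω : AddCircle p)) '' C = C) : C = univ := by
  obtain ⟨c, hc⟩ := hne
  have hadd : ∀ θ ∈ C, θ + ω ∈ C := fun θ hθ => hCω ▸ mem_image_of_mem _ hθ
  have hsub : ∀ θ ∈ C, θ - ω ∈ C := by
    intro θ hθ
    obtain ⟨θ', hθ', rfl⟩ := hCω.symm ▸ hθ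
    simpa using hθ'
  have horbit : ∀ n : ℤ, c + n • (ω : AddCircle p) ∈ C := by
    intro n
    induction n using Int.induction_on with
    | zero => simpa using hc
    | succ k ih => simpa [add_zsmul, add_assoc] using hadd _ ih
    | pred k ih => convert hsub _ ih using 1; rw [sub_zsmul, one_zsmul]; abel
  have hdense : DenseRange fun n : ℤ => c + n • (ω : AddCircle p) :=
    (Equiv.addLeft c).surjective.denseRange.comp (AddCircle.denseRange_zsmul_coe_iff.mpr hω)
      (continuous_const_add c)
  exact eq_univ_of_univ_subset <| hdense.closure_range ▸ hC.closure_subset_iff.mpr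
    (range_subset_iff.mpr horbit)

section IterateDynamics

variable {X : Type*} [MetricSpace X] {T : X → X}

lemma equicontinuousAt_iterate_fin (hT : Continuous T) (m : ℕ) (x : X) :
    EquicontinuousAt (fun n : Fin m => T^[n]) x :=
  equicontinuousAt_finite.mpr fun n => (hT.iterate n).continuousAt

lemma exists_mem_nhds_forall_dist_iterate_lt (hT : Continuous T) {U : Set X} (hU : IsOpen U)
    {ε : ℝ} (hε : 0 < ε) (hUε : ∀ y ∈ U, ∀ z ∈ U, ∀ n, dist (T^[n] y) (T^[n] z) < ε)
    {x : X} {m : ℕ} (hm : T^[m] x ∈ U) :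
    ∃ V ∈ 𝓝 x, ∀ y ∈ V, ∀ z ∈ V, ∀ n, dist (T^[n] y) (T^[n] z) < ε := by
  obtain ⟨V, hV, hVε⟩ :=
    Metric.equicontinuousAt_iff_pair.mp (equicontinuousAt_iterate_fin hT m x) ε hε
  refine ⟨V ∩ T^[m] ⁻¹' U,
    inter_mem hV ((hT.iterate m).continuousAt.preimage_mem_nhds (hU.mem_nhds hm)),
    fun y hy z hz n => ?_⟩
  rcases lt_or_ge n m with h | h
  · exact hVε y hy.1 z hz.1 ⟨n, h⟩
  · obtain ⟨k, rfl⟩ := Nat.exists_eq_add_of_le' h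
    simpa only [iterate_add_apply] using hUε _ hy.2 _ hz.2 k

lemma equicontinuousAt_iterate_of_denseRange (hT : Continuous T) {x : X}
    (hx : DenseRange fun n => T^[n] x)
    (hstab : ∀ ε > 0, ∃ U, IsOpen U ∧ U.Nonempty ∧
      ∀ y ∈ U, ∀ z ∈ U, ∀ n, dist (T^[n] y) (T^[n] z) < ε) :
    EquicontinuousAt (fun n => T^[n]) x := by
  refine Metric.equicontinuousAt_iff_pair.mpr fun ε hε => ?_
  obtain ⟨U, hU, hne, hUε⟩ := hstab ε hε
  obtain ⟨m, hm⟩ := hx.exists_mem_open hU hne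
  exact exists_mem_nhds_forall_dist_iterate_lt hT hU hε hUε hm

lemma equicontinuous_iterate_of_mem_closure (hT : Continuous T) {x : X}
    (hx : EquicontinuousAt (fun n => T^[n]) x)
    (hvisit : ∀ y, x ∈ closure (range fun n => T^[n] y)) :
    Equicontinuous fun n => T^[n] := by
  intro y
  refine Metric.equicontinuousAt_iff_pair.mpr fun ε hε => ?_
  obtain ⟨W, hW, hWε⟩ := Metric.equicontinuousAt_iff_pair.mp hx ε hε
  obtain ⟨U, hUW, hU, hxU⟩ := mem_nhds_iff.mp hW
  obtain ⟨_, hmU, m, rfl⟩ := mem_closure_iff.mp (hvisit y) U hU hxU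
  exact exists_mem_nhds_forall_dist_iterate_lt hT hU hε
    (fun a ha b hb => hWε a (hUW ha) b (hUW hb)) hmU

lemma isSyndetic_dist_iterate_lt {x : X} (hx : EquicontinuousAt (fun n => T^[n]) x)
    (hret : ∀ U, IsOpen U → U.Nonempty → IsSyndetic {n | (U ∩ T^[n] ⁻¹' U).Nonempty})
    {ε : ℝ} (hε : 0 < ε) : IsSyndetic {n | dist (T^[n] x) x < ε} := by
  obtain ⟨W, hW, hWε⟩ := Metric.equicontinuousAt_iff_pair.mp hx (ε / 2) (half_pos hε)
  obtain ⟨r, hr, hrW⟩ := Metric.mem_nhds_iff.mp hW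
  refine (hret _ Metric.isOpen_ball ⟨x, Metric.mem_ball_self (lt_min hr (half_pos hε))⟩).mono ?_
  rintro n ⟨u, hu, hnu⟩
  have hu' : u ∈ W := hrW (Metric.ball_subset_ball (min_le_left _ _) hu)
  have hnu' : dist (T^[n] u) x < ε / 2 := lt_of_lt_of_le hnu (min_le_right _ _)
  calc dist (T^[n] x) x ≤ dist (T^[n] x) (T^[n] u) + dist (T^[n] u) x := dist_triangle _ _ _
    _ < ε / 2 + ε / 2 := add_lt_add (hWε x (mem_of_mem_nhds hW) u hu' n) hnu'
    _ = ε := add_halves ε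

lemma mem_closure_range_iterate_of_isSyndetic (hT : Continuous T) {x : X}
    (hx : DenseRange fun n => T^[n] x) (hrec : ∀ ε > 0, IsSyndetic {n | dist (T^[n] x) x < ε})
    (y : X) : x ∈ closure (range fun n => T^[n] y) := by
  refine Metric.mem_closure_iff.mpr fun ε hε => ?_
  obtain ⟨K, hK⟩ := hrec (ε / 2) (half_pos hε)
  obtain ⟨δ, hδ, hδε⟩ :=
    Metric.equicontinuousAt_iff.mp (equicontinuousAt_iterate_fin hT (K + 1) y) (ε / 2) (half_pos hε)
  obtain ⟨a, ha⟩ := Metric.denseRange_iff.mp hx y δ hδ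
  obtain ⟨r, hr, har, hrK⟩ := hK a
  -- `y` shadows `T^[a] x` for `K` steps, and `T^[a] x` returns near `x` within `K` steps
  have hshadow : dist (T^[r] x) (T^[r - a] y) < ε / 2 := by
    rw [dist_comm, ← Nat.sub_add_cancel har, iterate_add_apply, Nat.add_sub_cancel]
    exact hδε _ (by rwa [dist_comm]) ⟨r - a, by omega⟩
  refine ⟨_, ⟨r - a, rfl⟩, ?_⟩
  calc dist x (T^[r - a] y) ≤ dist x (T^[r] x) + dist (T^[r] x) (T^[r - a] y) :=
        dist_triangle _ _ _
    _ < ε / 2 + ε / 2 := add_lt_add (by rwa [dist_comm]) hshadow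
    _ = ε := add_halves ε

lemma denseRange_iterate_of_mem_closure (hT : Continuous T) {x y : X}
    (hx : DenseRange fun n => T^[n] x) (hy : x ∈ closure (range fun n => T^[n] y)) :
    DenseRange fun n => T^[n] y := by
  have hmaps : MapsTo T (closure (range fun n => T^[n] y)) (closure (range fun n => T^[n] y)) :=
    MapsTo.closure (by rintro _ ⟨n, rfl⟩; exact ⟨n + 1, iterate_succ_apply' T n y⟩) hT
  exact dense_closure.mp (hx.mono (range_subset_iff.mpr fun n => hmaps.iterate n hy))

lemma exists_iterate_dist_lt_of_uniformEquicontinuous [CompactSpace X] (hsurj : Surjective T)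
    (hequi : UniformEquicontinuous fun n => T^[n]) {ε : ℝ} (hε : 0 < ε) (K : ℕ) :
    ∃ j ≥ K, ∀ x, dist (T^[j] x) x < ε := by
  obtain ⟨δ, hδ, hδε⟩ := Metric.uniformEquicontinuous_iff.mp hequi (ε / 3) (by positivity)
  obtain ⟨t, -, ht, hcover⟩ :=
    finite_cover_balls_of_compact (isCompact_univ (X := X)) (lt_min hδ (by positivity : 0 < ε / 6))
  have := ht.to_subtype
  -- pigeonhole on the pattern `n ↦ (a net point near T^[n] s)_{s ∈ t}`
  have hpat : ∀ n (s : t), ∃ c : t, dist (T^[n] s) c < ε / 6 := fun n s => by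
    obtain ⟨c, hc, hsc⟩ := mem_iUnion₂.mp (hcover (mem_univ (T^[n] s)))
    exact ⟨⟨c, hc⟩, lt_of_lt_of_le hsc (min_le_right _ _)⟩
  choose pat hpat using hpat
  obtain ⟨P, hP⟩ := Finite.exists_infinite_fiber pat
  obtain ⟨n, hn⟩ := (Set.infinite_coe_iff.mp hP).nonempty
  obtain ⟨n', hn', hlt⟩ := (Set.infinite_coe_iff.mp hP).exists_gt (n + K)
  refine ⟨n' - n, by omega, fun x => ?_⟩
  obtain ⟨w, rfl⟩ := (hsurj.iterate n) x
  obtain ⟨s, hs, hws⟩ := mem_iUnion₂.mp (hcover (mem_univ w))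
  have hws' : dist w s < δ := lt_of_lt_of_le hws (min_le_left _ _)
  have hs' : dist (T^[n'] s) (T^[n] s) < ε / 3 := by
    have h1 := hpat n ⟨s, hs⟩
    have h2 := hpat n' ⟨s, hs⟩
    rw [mem_preimage, mem_singleton_iff] at hn hn'
    rw [hn] at h1
    rw [hn'] at h2
    linarith [dist_triangle_right (T^[n'] s) (T^[n] s) (P ⟨s, hs⟩)]
  rw [← iterate_add_apply, Nat.sub_add_cancel (by omega)]
  calc dist (T^[n'] w) (T^[n] w)
      ≤ dist (T^[n'] w) (T^[n'] s) + dist (T^[n'] s) (T^[n] s) + dist (T^[n] s) (T^[n] w) :=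
        dist_triangle4 _ _ _ _
    _ < ε / 3 + ε / 3 + ε / 3 := by
        gcongr
        · exact hδε w s hws' n'
        · exact hδε s w (by rwa [dist_comm]) n
    _ = ε := by ring

lemma exists_pos_forall_le_dist_iterate (hequi : UniformEquicontinuous fun n => T^[n])
    (hrigid : ∀ ε > 0, ∀ K, ∃ j ≥ K, ∀ x, dist (T^[j] x) x < ε) {x y : X} (hxy : x ≠ y) :
    ∃ c > 0, ∀ n, c ≤ dist (T^[n] x) (T^[n] y) := by
  have hε : 0 < dist x y / 3 := by have := dist_pos.mpr hxy; positivity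
  obtain ⟨δ, hδ, hδε⟩ := Metric.uniformEquicontinuous_iff.mp hequi _ hε
  refine ⟨δ, hδ, fun n => le_of_not_gt fun hn => ?_⟩
  obtain ⟨j, hjn, hj⟩ := hrigid _ hε n
  obtain ⟨k, rfl⟩ := Nat.exists_eq_add_of_le' hjn
  have hclose := hδε _ _ hn k
  rw [← iterate_add_apply, ← iterate_add_apply] at hclose
  have := dist_triangle4 x (T^[k + n] x) (T^[k + n] y) y
  linarith [hj x, hj y, dist_comm x (T^[k + n] x)]

theorem CompactSpace.minimal_and_distal_of_not_sensitive [CompactSpace X] (hT : Continuous T)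
    (hsurj : Surjective T) {x : X} (hx : DenseRange fun n => T^[n] x)
    (hstab : ∀ ε > 0, ∃ U, IsOpen U ∧ U.Nonempty ∧
      ∀ y ∈ U, ∀ z ∈ U, ∀ n, dist (T^[n] y) (T^[n] z) < ε)
    (hret : ∀ U, IsOpen U → U.Nonempty → IsSyndetic {n | (U ∩ T^[n] ⁻¹' U).Nonempty}) :
    (∀ y, DenseRange fun n => T^[n] y) ∧
      ∀ y z, y ≠ z → ∃ c > 0, ∀ n, c ≤ dist (T^[n] y) (T^[n] z) := by
  have hxeq := equicontinuousAt_iterate_of_denseRange hT hx hstab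
  have hvisit := mem_closure_range_iterate_of_isSyndetic hT hx
    fun _ hε => isSyndetic_dist_iterate_lt hxeq hret hε
  have hequi := CompactSpace.uniformEquicontinuous_of_equicontinuous
    (equicontinuous_iterate_of_mem_closure hT hxeq hvisit)
  exact ⟨fun y => denseRange_iterate_of_mem_closure hT hx (hvisit y), fun y z hyz =>
    exists_pos_forall_le_dist_iterate hequi
      (fun _ hε K => exists_iterate_dist_lt_of_uniformEquicontinuous hsurj hequi hε K) hyz⟩

end IterateDynamics

theorem IsCompact.minimal_and_distal_of_not_sensitive {X : Type*} [MetricSpace X]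
    [MeasurableSpace X] [BorelSpace X] {f : X → X} {A : Set X} {μ : Measure X} [IsFiniteMeasure μ]
    (hA : IsCompact A) (hf : Continuous f) (hfA : f '' A = A) {x : X} (hx : x ∈ A)
    (hxA : A ⊆ closure (range fun n => f^[n] x)) (hμ : MeasurePreserving f μ μ)
    (hμA : μ Aᶜ = 0) (hμfull : ∀ U, IsOpen U → (U ∩ A).Nonempty → 0 < μ U)
    (hstab : ∀ ε > 0, ∃ x ∈ A, ∃ δ > 0, ∀ y ∈ A, ∀ z ∈ A,
      dist x y ≤ δ → dist x z ≤ δ → ∀ n, dist (f^[n] y) (f^[n] z) < ε) :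
    (∀ y ∈ A, A ⊆ closure (range fun n => f^[n] y)) ∧
      ∀ y ∈ A, ∀ z ∈ A, y ≠ z → ∃ c > 0, ∀ n, c ≤ dist (f^[n] y) (f^[n] z) := by
  have hmaps : MapsTo f A A := fun y hy => hfA ▸ mem_image_of_mem f hy
  have : CompactSpace A := isCompact_iff_compactSpace.mp hA
  have hval : ∀ n (p : A), ((hmaps.restrict)^[n] p : X) = f^[n] p := fun n p =>
    hmaps.coe_iterate_restrict p n
  have horbit : ∀ p : A, Subtype.val '' range (fun n => (hmaps.restrict)^[n] p) =
      range fun n => f^[n] p := fun p => by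
    rw [← range_comp]; exact congrArg range (funext fun n => hval n p)
  have hsurj : Surjective hmaps.restrict := by
    rintro ⟨p, hp⟩
    obtain ⟨q, hq, rfl⟩ := hfA.symm ▸ hp
    exact ⟨⟨q, hq⟩, rfl⟩
  have hstab' : ∀ ε > 0, ∃ U : Set A, IsOpen U ∧ U.Nonempty ∧
      ∀ y ∈ U, ∀ z ∈ U, ∀ n, dist ((hmaps.restrict)^[n] y) ((hmaps.restrict)^[n] z) < ε := by
    intro ε hε
    obtain ⟨x₀, hx₀, δ, hδ, hstable⟩ := hstab ε hε
    refine ⟨Metric.ball ⟨x₀, hx₀⟩ δ, Metric.isOpen_ball, ⟨_, Metric.mem_ball_self hδ⟩,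
      fun y hy z hz n => ?_⟩
    rw [Subtype.dist_eq, hval, hval]
    exact hstable y y.2 z z.2 (Metric.mem_ball'.mp hy).le (Metric.mem_ball'.mp hz).le n
  have hret : ∀ U : Set A, IsOpen U → U.Nonempty →
      IsSyndetic {n | (U ∩ (hmaps.restrict)^[n] ⁻¹' U).Nonempty} := by
    rintro _ hU ⟨p, hp⟩
    obtain ⟨V, hV, rfl⟩ := isOpen_induced_iff.mp hU
    have hVA : μ (V ∩ A) ≠ 0 := by
      rw [measure_inter_conull hμA]; exact (hμfull V hV ⟨p, hp, p.2⟩).ne'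
    refine (hμ.isSyndetic_inter_preimage_iterate_nonempty
      (hV.measurableSet.inter hA.measurableSet).nullMeasurableSet hVA).mono ?_
    rintro n ⟨u, ⟨huV, huA⟩, hnu, -⟩
    exact ⟨⟨u, huA⟩, huV, by simpa [mem_preimage, hval] using hnu⟩
  obtain ⟨hmin, hdistal⟩ := CompactSpace.minimal_and_distal_of_not_sensitive
    (hf.restrict hmaps) hsurj (x := ⟨x, hx⟩) (Subtype.dense_iff.mpr (by rwa [horbit])) hstab' hret
  refine ⟨fun y hy => horbit ⟨y, hy⟩ ▸ Subtype.dense_iff.mp (hmin ⟨y, hy⟩),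
    fun y hy z hz hyz => ?_⟩
  simpa only [Subtype.dist_eq, hval] using hdistal ⟨y, hy⟩ ⟨z, hz⟩ (by simpa using hyz)

section Fibers

variable {Θ : Type*} {A : Set (Θ × ℝ)}

noncomputable def fiberSup (A : Set (Θ × ℝ)) (θ : Θ) : ℝ := sSup (Prod.mk θ ⁻¹' A)

noncomputable def fiberInf (A : Set (Θ × ℝ)) (θ : Θ) : ℝ := sInf (Prod.mk θ ⁻¹' A)

variable {g : Θ → Θ} {F : Θ → ℝ → ℝ} {f : Θ × ℝ → Θ × ℝ}

lemma fiber_apply_eq_image (hg : Injective g) (hf : ∀ p, f p = (g p.1, F p.1 p.2))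
    (hfA : f '' A = A) (θ : Θ) : Prod.mk (g θ) ⁻¹' A = F θ '' (Prod.mk θ ⁻¹' A) := by
  ext t
  nth_rw 1 [← hfA]
  simp only [mem_preimage, mem_image, Prod.exists, hf, Prod.mk.injEq, hg.eq_iff]
  constructor
  · rintro ⟨_, s, hs, rfl, rfl⟩
    exact ⟨s, hs, rfl⟩
  · rintro ⟨s, hs, rfl⟩
    exact ⟨θ, s, hs, rfl, rfl⟩

variable [TopologicalSpace Θ] [T2Space Θ]

lemma IsCompact.fiber (hA : IsCompact A) (θ : Θ) : IsCompact (Prod.mk θ ⁻¹' A) :=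
  (hA.image continuous_snd).of_isClosed_subset (hA.isClosed.preimage (Continuous.prodMk_right θ))
    fun _ ht => ⟨_, ht, rfl⟩

lemma isGreatest_fiberSup (hA : IsCompact A) {θ : Θ} (hne : (Prod.mk θ ⁻¹' A).Nonempty) :
    IsGreatest (Prod.mk θ ⁻¹' A) (fiberSup A θ) :=
  (hA.fiber θ).isGreatest_sSup hne

lemma isLeast_fiberInf (hA : IsCompact A) {θ : Θ} (hne : (Prod.mk θ ⁻¹' A).Nonempty) :
    IsLeast (Prod.mk θ ⁻¹' A) (fiberInf A θ) :=
  (hA.fiber θ).isLeast_sInf hne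

lemma lowerSemicontinuous_fiberInf (hA : IsCompact A) (hne : ∀ θ, (Prod.mk θ ⁻¹' A).Nonempty) :
    LowerSemicontinuous (fiberInf A) := by
  intro θ y hy
  have hK : IsClosed (Prod.fst '' (A ∩ univ ×ˢ Iic y)) :=
    ((hA.inter_right (isClosed_univ.prod isClosed_Iic)).image continuous_fst).isClosed
  have hθ : θ ∉ Prod.fst '' (A ∩ univ ×ˢ Iic y) := by
    rintro ⟨_, ⟨ht, -, hty⟩, rfl⟩
    exact (((isLeast_fiberInf hA (hne _)).2 ht).trans hty).not_gt hy
  filter_upwards [hK.isOpen_compl.mem_nhds hθ] with θ' hθ'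
  by_contra! h
  exact hθ' ⟨_, ⟨(isLeast_fiberInf hA (hne θ')).1, trivial, h⟩, rfl⟩

lemma upperSemicontinuous_fiberSup (hA : IsCompact A) (hne : ∀ θ, (Prod.mk θ ⁻¹' A).Nonempty) :
    UpperSemicontinuous (fiberSup A) := by
  intro θ y hy
  have hK : IsClosed (Prod.fst '' (A ∩ univ ×ˢ Ici y)) :=
    ((hA.inter_right (isClosed_univ.prod isClosed_Ici)).image continuous_fst).isClosed
  have hθ : θ ∉ Prod.fst '' (A ∩ univ ×ˢ Ici y) := by
    rintro ⟨_, ⟨ht, -, hty⟩, rfl⟩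
    exact (hty.trans ((isGreatest_fiberSup hA (hne _)).2 ht)).not_gt hy
  filter_upwards [hK.isOpen_compl.mem_nhds hθ] with θ' hθ'
  by_contra! h
  exact hθ' ⟨_, ⟨(isGreatest_fiberSup hA (hne θ')).1, trivial, h⟩, rfl⟩

lemma continuous_fiberSup (hA : IsCompact A) (hne : ∀ θ, (Prod.mk θ ⁻¹' A).Nonempty)
    (heq : fiberInf A = fiberSup A) : Continuous (fiberSup A) :=
  continuous_iff_lower_upperSemicontinuous.mpr
    ⟨heq ▸ lowerSemicontinuous_fiberInf hA hne, upperSemicontinuous_fiberSup hA hne⟩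

lemma eq_setOf_snd_eq_fiberSup (hA : IsCompact A) (hne : ∀ θ, (Prod.mk θ ⁻¹' A).Nonempty)
    (heq : fiberInf A = fiberSup A) : A = {p | p.2 = fiberSup A p.1} := by
  ext ⟨θ, t⟩
  refine ⟨fun h => le_antisymm ((isGreatest_fiberSup hA (hne θ)).2 h) ?_, fun h => ?_⟩
  · exact heq ▸ (isLeast_fiberInf hA (hne θ)).2 h
  · exact (show t = fiberSup A θ from h) ▸ (isGreatest_fiberSup hA (hne θ)).1

lemma semiconj_fiberSup (hA : IsCompact A) (hne : ∀ θ, (Prod.mk θ ⁻¹' A).Nonempty)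
    (hg : Injective g) (hf : ∀ p, f p = (g p.1, F p.1 p.2)) (hfA : f '' A = A)
    (hmono : ∀ θ, MonotoneOn (F θ) (Prod.mk θ ⁻¹' A)) :
    Semiconj (fun θ => (θ, fiberSup A θ)) g f := fun θ => by
  rw [hf, ((hmono θ).map_isGreatest (isGreatest_fiberSup hA (hne θ))).unique
    (fiber_apply_eq_image hg hf hfA θ ▸ isGreatest_fiberSup hA (hne (g θ)))]

lemma semiconj_fiberInf (hA : IsCompact A) (hne : ∀ θ, (Prod.mk θ ⁻¹' A).Nonempty)
    (hg : Injective g) (hf : ∀ p, f p = (g p.1, F p.1 p.2)) (hfA : f '' A = A)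
    (hmono : ∀ θ, MonotoneOn (F θ) (Prod.mk θ ⁻¹' A)) :
    Semiconj (fun θ => (θ, fiberInf A θ)) g f := fun θ => by
  rw [hf, ((hmono θ).map_isLeast (isLeast_fiberInf hA (hne θ))).unique
    (fiber_apply_eq_image hg hf hfA θ ▸ isLeast_fiberInf hA (hne (g θ)))]

end Fibers

section ProximalFibers

variable {Θ : Type*} [MetricSpace Θ] {A : Set (Θ × ℝ)} {g : Θ → Θ} {f : Θ × ℝ → Θ × ℝ}

-- Lower semicontinuity of `fiberInf` at `θ` turns "the top orbit comes near the bottom point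
-- over `θ`" into "the top and bottom points over some `g^[n] θ` are close".
lemma exists_dist_iterate_fiberSup_fiberInf_lt (hA : IsCompact A)
    (hne : ∀ θ, (Prod.mk θ ⁻¹' A).Nonempty) (hsup : Semiconj (fun θ => (θ, fiberSup A θ)) g f)
    (hinf : Semiconj (fun θ => (θ, fiberInf A θ)) g f) {θ : Θ}
    (happ : (θ, fiberInf A θ) ∈ closure (range fun n => f^[n] (θ, fiberSup A θ)))
    {c : ℝ} (hc : 0 < c) :
    ∃ n, dist (f^[n] (θ, fiberSup A θ)) (f^[n] (θ, fiberInf A θ)) < c := by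
  obtain ⟨r, hr, hlsc⟩ := Metric.eventually_nhds_iff.mp
    (lowerSemicontinuous_fiberInf hA hne θ (fiberInf A θ - c / 2) (by linarith))
  obtain ⟨_, ⟨n, rfl⟩, hn⟩ :=
    Metric.mem_closure_iff.mp happ (min r (c / 2)) (lt_min hr (half_pos hc))
  have hsupn : f^[n] (θ, fiberSup A θ) = (g^[n] θ, fiberSup A (g^[n] θ)) :=
    ((hsup.iterate_right n) θ).symm
  have hinfn : f^[n] (θ, fiberInf A θ) = (g^[n] θ, fiberInf A (g^[n] θ)) :=
    ((hinf.iterate_right n) θ).symm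
  have hle : fiberInf A (g^[n] θ) ≤ fiberSup A (g^[n] θ) :=
    (isLeast_fiberInf hA (hne _)).2 (isGreatest_fiberSup hA (hne _)).1
  simp only [hsupn, Prod.dist_eq, max_lt_iff, lt_min_iff, Real.dist_eq, abs_sub_lt_iff] at hn
  have hgap : fiberInf A θ - c / 2 < fiberInf A (g^[n] θ) := hlsc (by rw [dist_comm]; exact hn.1.1)
  refine ⟨n, ?_⟩
  simp only [hsupn, hinfn, Prod.dist_eq, dist_self, Real.dist_eq, max_lt_iff, abs_sub_lt_iff]
  exact ⟨hc, by linarith, by linarith⟩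

lemma fiberInf_eq_fiberSup_of_distal (hA : IsCompact A) (hne : ∀ θ, (Prod.mk θ ⁻¹' A).Nonempty)
    (hsup : Semiconj (fun θ => (θ, fiberSup A θ)) g f)
    (hinf : Semiconj (fun θ => (θ, fiberInf A θ)) g f)
    (hmin : ∀ y ∈ A, A ⊆ closure (range fun n => f^[n] y))
    (hdistal : ∀ y ∈ A, ∀ z ∈ A, y ≠ z → ∃ c > 0, ∀ n, c ≤ dist (f^[n] y) (f^[n] z)) :
    fiberInf A = fiberSup A := by
  funext θ
  by_contra hθ
  have hsupA := (isGreatest_fiberSup hA (hne θ)).1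
  have hinfA := (isLeast_fiberInf hA (hne θ)).1
  obtain ⟨c, hc, hcd⟩ := hdistal _ hsupA _ hinfA (by simpa [eq_comm] using hθ)
  obtain ⟨n, hn⟩ := exists_dist_iterate_fiberSup_fiberInf_lt hA hne hsup hinf
    (hmin _ hsupA hinfA) hc
  exact (hcd n).not_gt hn

end ProximalFibers

theorem monotone_interval_dichotomy_general
    (ω : ℝ) (hω : Irrational ω) (a b : ℝ)
    (F : AddCircle (1 : ℝ) → ℝ → ℝ)
    (hFmono : ∀ θ, MonotoneOn (F θ) (Set.Icc a b))
    (f : AddCircle (1 : ℝ) × ℝ → AddCircle (1 : ℝ) × ℝ)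
    (hf : ∀ p, f p = (p.1 + (ω : AddCircle (1 : ℝ)), F p.1 p.2))
    (hcont : Continuous f)
    (A : Set (AddCircle (1 : ℝ) × ℝ)) (hAsub : A ⊆ Set.univ ×ˢ Set.Icc a b)
    (hA : IsCompact A) (hinv : f '' A = A)
    (htrans : ∃ x ∈ A, A ⊆ closure (Set.range fun n : ℕ => f^[n] x))
    (μ : Measure (AddCircle (1 : ℝ) × ℝ)) [IsFiniteMeasure μ]
    (hμinv : ∀ s, MeasurableSet s → μ (f ⁻¹' s) = μ s)
    (hμA : μ Aᶜ = 0)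
    (hμfull : ∀ U : Set (AddCircle (1 : ℝ) × ℝ), IsOpen U → (U ∩ A).Nonempty → 0 < μ U) :
    (∃ ε > 0, ∀ x ∈ A, ∀ δ > 0, ∃ y ∈ A, ∃ z ∈ A,
        dist x y ≤ δ ∧ dist x z ≤ δ ∧ ∃ n : ℕ, ε ≤ dist (f^[n] y) (f^[n] z)) ∨
    (∃ ψ : AddCircle (1 : ℝ) → ℝ, Continuous ψ ∧
        A = {p : AddCircle (1 : ℝ) × ℝ | p.2 = ψ p.1}) := by
  by_cases hsens : ∃ ε > 0, ∀ x ∈ A, ∀ δ > 0, ∃ y ∈ A, ∃ z ∈ A,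
      dist x y ≤ δ ∧ dist x z ≤ δ ∧ ∃ n : ℕ, ε ≤ dist (f^[n] y) (f^[n] z)
  · exact Or.inl hsens
  push Not at hsens
  right
  obtain ⟨x, hx, hxA⟩ := htrans
  have hμ : MeasurePreserving f μ μ := ⟨hcont.measurable, Measure.ext fun s hs => by
    rw [Measure.map_apply hcont.measurable hs, hμinv s hs]⟩
  obtain ⟨hmin, hdistal⟩ :=
    hA.minimal_and_distal_of_not_sensitive hcont hinv hx hxA hμ hμA hμfull hsens
  have hproj : Prod.fst '' A = univ := by
    refine AddCircle.eq_univ_of_isClosed_of_image_add_eq (by simpa using hω)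
      (hA.image continuous_fst).isClosed ⟨x.1, mem_image_of_mem _ hx⟩ ?_
    conv_rhs => rw [← hinv]
    simp only [image_image, hf]
  have hne : ∀ θ, (Prod.mk θ ⁻¹' A).Nonempty := fun θ => by
    obtain ⟨p, hp, rfl⟩ := hproj.symm ▸ mem_univ θ
    exact ⟨p.2, hp⟩
  have hmono : ∀ θ, MonotoneOn (F θ) (Prod.mk θ ⁻¹' A) :=
    fun θ => (hFmono θ).mono fun _ ht => (hAsub ht).2
  have hrot : Injective (· + (ω : AddCircle (1 : ℝ))) := add_left_injective _
  have heq := fiberInf_eq_fiberSup_of_distal hA hne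
    (semiconj_fiberSup hA hne hrot hf hinv hmono) (semiconj_fiberInf hA hne hrot hf hinv hmono)
    hmin hdistal
  exact ⟨fiberSup A, continuous_fiberSup hA hne heq, eq_setOf_snd_eq_fiberSup hA hne heq⟩

/-- For a quasiperiodically forced monotone interval map over an
irrational rotation and a compact invariant set `𝒜` without isolated points on
which `f` is transitive and supports a fully-supported finite invariant measure:
either `f|𝒜` has sensitive dependence on initial conditions or `𝒜` is the graph of
a continuous function. -/
theorem monotone_interval_dichotomy
    (ω : ℝ) (hω : Irrational ω) (a b : ℝ) (hab : a ≤ b)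
    (F : AddCircle (1 : ℝ) → ℝ → ℝ)
    (hFmono : ∀ θ, MonotoneOn (F θ) (Set.Icc a b))
    (hFmaps : ∀ θ, Set.MapsTo (F θ) (Set.Icc a b) (Set.Icc a b))
    (f : AddCircle (1 : ℝ) × ℝ → AddCircle (1 : ℝ) × ℝ)
    (hf : ∀ p, f p = (p.1 + (ω : AddCircle (1 : ℝ)), F p.1 p.2))
    (hcont : Continuous f)
    (A : Set (AddCircle (1 : ℝ) × ℝ)) (hAsub : A ⊆ Set.univ ×ˢ Set.Icc a b)
    (hA : IsCompact A) (hinv : f '' A = A)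
    (hiso : ∀ x ∈ A, x ∈ closure (A \ {x}))
    (htrans : ∃ x ∈ A, A ⊆ closure (Set.range fun n : ℕ => f^[n] x))
    (μ : Measure (AddCircle (1 : ℝ) × ℝ)) [IsFiniteMeasure μ]
    (hμinv : ∀ s, MeasurableSet s → μ (f ⁻¹' s) = μ s)
    (hμA : μ Aᶜ = 0)
    (hμfull : ∀ U : Set (AddCircle (1 : ℝ) × ℝ), IsOpen U → (U ∩ A).Nonempty → 0 < μ U) :
    (∃ ε > 0, ∀ x ∈ A, ∀ δ > 0, ∃ y ∈ A, ∃ z ∈ A,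
        dist x y ≤ δ ∧ dist x z ≤ δ ∧ ∃ n : ℕ, ε ≤ dist (f^[n] y) (f^[n] z)) ∨
    (∃ ψ : AddCircle (1 : ℝ) → ℝ, Continuous ψ ∧
        A = {p : AddCircle (1 : ℝ) × ℝ | p.2 = ψ p.1}) :=
  monotone_interval_dichotomy_general ω hω a b F hFmono f hf hcont A hAsub hA hinv htrans μ hμinv
    hμA hμfull
end

section
/- Let f be a quasiperiodically forced monotone interval map on 𝕋¹ × [a,b] over an irrational rotation, whose global attractor 𝒦 := ⋂_{n∈ℕ} fⁿ(𝕋¹×[a,b]) is pinched and whose upper and lower bounding graphs φ⁺(θ) := sup 𝒦_θ and φ⁻(θ) := inf 𝒦_θ are both non-continuous. Then f has sensitive dependence on initial conditions on all of 𝕋¹ × [a,b]. -/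
/-!
The upper bounding graph `φ⁺` is the decreasing limit of the continuous graphs
`θ ↦ (f^[n] (θ - n • ω, b)).2`, hence upper semicontinuous, and it is `f`-invariant. If it is
not continuous, it drops below some `c < φ⁺ θ*` arbitrarily close to `θ*`. Take a point `(θ, ξ)`
above `φ⁺`. By minimality of the rotation, `θ + n • ω` comes close to such a drop, where the
`n`-th image of `(θ, ξ)` lies below `c`. But the nearby point `(θ* - n • ω, ξ)` is still above
`φ⁺`, so its `n`-th image stays above `φ⁺ θ*`. This gives one `ε` for every point above `φ⁺`.
Reversing the order of the fibre gives the same statement below `φ⁻`. Pinching makes `φ⁺ = φ⁻`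
on a dense orbit, so the points above `φ⁺` or below `φ⁻` are dense in `𝕋¹ × [a, b]`, and the
set of points of sensitivity `ε` is closed.
-/

open Set Filter Topology Metric Function OrderDual

section Sensitivity

variable {α : Type*} [PseudoMetricSpace α]

def IsSensitiveAt (f : α → α) (ε : ℝ) (x : α) : Prop :=
  ∀ δ > 0, ∃ y ∈ closedBall x δ, ∃ z ∈ closedBall x δ, ∃ n : ℕ, ε ≤ dist (f^[n] y) (f^[n] z)

theorem IsSensitiveAt.mono {f : α → α} {ε ε' : ℝ} {x : α} (h : IsSensitiveAt f ε x)
    (hε : ε' ≤ ε) : IsSensitiveAt f ε' x := fun δ hδ =>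
  let ⟨y, hy, z, hz, n, hn⟩ := h δ hδ
  ⟨y, hy, z, hz, n, hε.trans hn⟩

theorem isClosed_setOf_isSensitiveAt (f : α → α) (ε : ℝ) :
    IsClosed {x | IsSensitiveAt f ε x} := by
  refine isClosed_of_closure_subset fun x hx δ hδ => ?_
  obtain ⟨x', hx', hxx'⟩ := Metric.mem_closure_iff.1 hx (δ / 2) (half_pos hδ)
  obtain ⟨y, hy, z, hz, n, hn⟩ := hx' (δ / 2) (half_pos hδ)
  have hball : closedBall x' (δ / 2) ⊆ closedBall x δ :=
    closedBall_subset_closedBall' (by rw [dist_comm]; linarith)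
  exact ⟨y, hball hy, z, hball hz, n, hn⟩

end Sensitivity

theorem DenseRange.exists_ge_add_nsmul_mem {G : Type*} [AddGroup G] [TopologicalSpace G]
    [ContinuousAdd G] {ω : G} (hω : DenseRange fun n : ℕ => n • ω) (θ : G) (m : ℕ)
    {U : Set G} (hU : IsOpen U) (hne : U.Nonempty) : ∃ n ≥ m, θ + n • ω ∈ U := by
  obtain ⟨u, hu⟩ := hne
  obtain ⟨k, hk⟩ := hω.exists_mem_open (hU.preimage (continuous_const_add (θ + m • ω)))
    ⟨-(θ + m • ω) + u, mem_preimage.2 (by rwa [add_neg_cancel_left])⟩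
  exact ⟨m + k, le_add_right le_rfl, by simpa [add_nsmul, add_assoc] using hk⟩

theorem AddCircle.denseRange_nsmul_coe {ω : ℝ} (hω : Irrational ω) :
    DenseRange fun n : ℕ => n • (ω : AddCircle (1 : ℝ)) :=
  denseRange_zsmul_iff_nsmul.1 (AddCircle.denseRange_zsmul_coe_iff.2 (by rwa [div_one]))

theorem UpperSemicontinuous.exists_frequently_lt_of_not_continuous {α X : Type*}
    [TopologicalSpace α] [LinearOrder X] [DenselyOrdered X] [TopologicalSpace X] [OrderTopology X]
    {φ : α → X} (hφ : UpperSemicontinuous φ) (hnc : ¬Continuous φ) :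
    ∃ θ c, c < φ θ ∧ ∃ᶠ θ' in 𝓝 θ, φ θ' < c := by
  have hlsc : ¬LowerSemicontinuous φ := fun h =>
    hnc (continuous_iff_lower_upperSemicontinuous.2 ⟨h, hφ⟩)
  rw [lowerSemicontinuous_iff_frequently] at hlsc
  push Not at hlsc
  obtain ⟨θ, y, hfreq, hy⟩ := hlsc
  obtain ⟨c, hyc, hc⟩ := exists_between hy
  exact ⟨θ, c, hc, hfreq.mono fun _ h => h.trans_lt hyc⟩

theorem exists_pos_forall_le_dist_of_lt {X : Type*} [ConditionallyCompleteLinearOrder X]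
    [PseudoMetricSpace X] [OrderTopology X] (a : X) {c d : X} (hcd : c < d) :
    ∃ ε > 0, ∀ u ∈ Icc a c, ∀ v, d ≤ v → ε ≤ dist u v := by
  obtain ⟨r, hr, h⟩ := Metric.exists_pos_forall_lt_edist isCompact_Icc (isClosed_Ici (a := d))
    (disjoint_left.2 fun u hu hu' => (hu.2.trans_lt hcd).not_ge hu')
  refine ⟨r, hr, fun u hu v hv => ?_⟩
  have := h u hu v hv
  rw [edist_nndist, ENNReal.coe_lt_coe] at this
  exact (NNReal.coe_lt_coe.2 this).le

section MonotoneSkew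

variable {G X : Type*} [AddMonoid G] [Preorder X]

structure IsMonotoneSkewOn (f : G × X → G × X) (ω : G) (I : Set X) : Prop where
  fst_apply : ∀ p, (f p).1 = p.1 + ω
  mapsTo : ∀ θ, MapsTo (fun ξ => (f (θ, ξ)).2) I I
  monotoneOn : ∀ θ, MonotoneOn (fun ξ => (f (θ, ξ)).2) I

namespace IsMonotoneSkewOn

variable {f g : G × X → G × X} {ω ω' : G} {I : Set X}

theorem of_forall_eq {F : G → X → X} (hf : ∀ p, f p = (p.1 + ω, F p.1 p.2))
    (hmono : ∀ θ, MonotoneOn (F θ) I) (hmaps : ∀ θ, MapsTo (F θ) I I) :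
    IsMonotoneSkewOn f ω I := by
  obtain rfl : f = _ := funext hf
  exact ⟨fun _ => rfl, hmaps, hmono⟩

theorem apply_eq (hf : IsMonotoneSkewOn f ω I) (θ : G) (ξ : X) :
    f (θ, ξ) = (θ + ω, (f (θ, ξ)).2) :=
  Prod.ext (hf.fst_apply _) rfl

theorem comp (hg : IsMonotoneSkewOn g ω' I) (hf : IsMonotoneSkewOn f ω I) :
    IsMonotoneSkewOn (g ∘ f) (ω + ω') I := by
  have hsnd : ∀ θ, (fun ξ => ((g ∘ f) (θ, ξ)).2) =
      (fun ξ => (g (θ + ω, ξ)).2) ∘ fun ξ => (f (θ, ξ)).2 := fun θ =>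
    funext fun ξ => by simp only [comp_apply]; rw [← hf.apply_eq]
  refine ⟨fun p => ?_, fun θ => ?_, fun θ => ?_⟩
  · simp only [comp_apply, hg.fst_apply, hf.fst_apply, add_assoc]
  · rw [hsnd]; exact (hg.mapsTo _).comp (hf.mapsTo θ)
  · rw [hsnd]; exact (hg.monotoneOn _).comp (hf.monotoneOn θ) (hf.mapsTo θ)

theorem iterate (hf : IsMonotoneSkewOn f ω I) : ∀ n : ℕ, IsMonotoneSkewOn f^[n] (n • ω) I
  | 0 => ⟨fun _ => by simp, fun _ => mapsTo_id I, fun _ => monotoneOn_id⟩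
  | n + 1 => by rw [iterate_succ, succ_nsmul']; exact (hf.iterate n).comp hf

theorem mapsTo_univ_prod (hf : IsMonotoneSkewOn f ω I) :
    MapsTo f (univ ×ˢ I) (univ ×ˢ I) := fun p hp =>
  ⟨trivial, hf.mapsTo p.1 hp.2⟩

theorem dual (hf : IsMonotoneSkewOn f ω I) :
    IsMonotoneSkewOn (X := Xᵒᵈ) f ω (ofDual ⁻¹' I) :=
  ⟨hf.fst_apply, hf.mapsTo, fun θ => (hf.monotoneOn θ).dual⟩

theorem dual_Icc {a b : X} (hf : IsMonotoneSkewOn f ω (Icc a b)) :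
    IsMonotoneSkewOn (X := Xᵒᵈ) f ω (Icc (toDual b) (toDual a)) := by
  rw [Icc_toDual]
  exact hf.dual

end IsMonotoneSkewOn

end MonotoneSkew

def attractor {α : Type*} (f : α → α) (s : Set α) : Set α := ⋂ n : ℕ, f^[n] '' s

theorem Set.MapsTo.iterate_image_subset {α : Type*} {f : α → α} {s : Set α} (h : MapsTo f s s)
    {m n : ℕ} (hmn : m ≤ n) : f^[n] '' s ⊆ f^[m] '' s := by
  obtain ⟨k, rfl⟩ := Nat.exists_eq_add_of_le hmn
  rw [iterate_add, image_comp]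
  exact image_mono ((h.iterate k).image_subset)

section UpperIterate

variable {G X : Type*} [AddCommGroup G] {f : G × X → G × X} {ω : G} {a b : X}

def upperIterate (f : G × X → G × X) (ω : G) (b : X) (n : ℕ) (θ : G) : X :=
  (f^[n] (θ - n • ω, b)).2

theorem continuous_upperIterate [TopologicalSpace G] [IsTopologicalAddGroup G] [TopologicalSpace X]
    (hcont : Continuous f) (n : ℕ) : Continuous (upperIterate f ω b n) :=
  continuous_snd.comp ((hcont.iterate n).comp ((continuous_sub_right _).prodMk continuous_const))

variable [Preorder X]

theorem IsMonotoneSkewOn.iterate_apply_sub_nsmul {I : Set X} (hf : IsMonotoneSkewOn f ω I)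
    (n : ℕ) (θ : G) (ξ : X) : f^[n] (θ - n • ω, ξ) = (θ, (f^[n] (θ - n • ω, ξ)).2) := by
  rw [(hf.iterate n).apply_eq, sub_add_cancel]

theorem IsMonotoneSkewOn.fiber_iterate_image {I : Set X} (hf : IsMonotoneSkewOn f ω I)
    (n : ℕ) (θ : G) :
    {ξ | (θ, ξ) ∈ f^[n] '' (univ ×ˢ I)} = (fun t => (f^[n] (θ - n • ω, t)).2) '' I := by
  ext ξ
  constructor
  · rintro ⟨⟨β, t⟩, ⟨-, ht⟩, hβ⟩
    rw [(hf.iterate n).apply_eq] at hβ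
    obtain ⟨rfl, rfl⟩ := Prod.mk.inj hβ
    exact ⟨t, ht, by rw [add_sub_cancel_right]⟩
  · rintro ⟨t, ht, rfl⟩
    exact ⟨_, ⟨trivial, ht⟩, hf.iterate_apply_sub_nsmul n θ t⟩

theorem upperIterate_mem (hf : IsMonotoneSkewOn f ω (Icc a b)) (hab : a ≤ b) (n : ℕ) (θ : G) :
    upperIterate f ω b n θ ∈ Icc a b :=
  (hf.iterate n).mapsTo _ (right_mem_Icc.2 hab)

theorem iterate_snd_le_upperIterate (hf : IsMonotoneSkewOn f ω (Icc a b)) {ξ : X}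
    (hξ : ξ ∈ Icc a b) (n : ℕ) (θ : G) :
    (f^[n] (θ, ξ)).2 ≤ upperIterate f ω b n (θ + n • ω) := by
  rw [upperIterate, add_sub_cancel_right]
  exact (hf.iterate n).monotoneOn θ hξ (right_mem_Icc.2 (hξ.1.trans hξ.2)) hξ.2

theorem antitone_upperIterate (hf : IsMonotoneSkewOn f ω (Icc a b)) (hab : a ≤ b) (θ : G) :
    Antitone fun n => upperIterate f ω b n θ := by
  refine antitone_nat_of_succ_le fun n => ?_
  have h := iterate_snd_le_upperIterate hf (hf.mapsTo (θ - (n + 1) • ω) (right_mem_Icc.2 hab)) n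
    (θ - (n + 1) • ω + ω)
  rwa [← hf.apply_eq, ← iterate_succ_apply,
    show θ - (n + 1) • ω + ω + n • ω = θ by rw [succ_nsmul]; abel] at h

theorem bddBelow_range_upperIterate (hf : IsMonotoneSkewOn f ω (Icc a b)) (hab : a ≤ b)
    (θ : G) : BddBelow (range fun n => upperIterate f ω b n θ) :=
  ⟨a, forall_mem_range.2 fun n => (upperIterate_mem hf hab n θ).1⟩

theorem le_upperIterate_of_mem (hf : IsMonotoneSkewOn f ω (Icc a b)) {n : ℕ} {θ : G} {ξ : X}
    (h : (θ, ξ) ∈ f^[n] '' (univ ×ˢ Icc a b)) : ξ ≤ upperIterate f ω b n θ := by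
  have h' : ξ ∈ {ξ | (θ, ξ) ∈ f^[n] '' (univ ×ˢ Icc a b)} := h
  rw [hf.fiber_iterate_image] at h'
  obtain ⟨t, ht, rfl⟩ := h'
  exact (hf.iterate n).monotoneOn _ ht (right_mem_Icc.2 (ht.1.trans ht.2)) ht.2

theorem upperIterate_succ_add (hf : IsMonotoneSkewOn f ω (Icc a b)) (n : ℕ) (θ : G) :
    upperIterate f ω b (n + 1) (θ + ω) = (f (θ, upperIterate f ω b n θ)).2 := by
  rw [upperIterate, iterate_succ_apply', show θ + ω - (n + 1) • ω = θ - n • ω by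
    rw [succ_nsmul]; abel, hf.iterate_apply_sub_nsmul]
  rfl

end UpperIterate

section Graphs

variable {G X : Type*} [ConditionallyCompleteLinearOrder X]

def upperGraph (K : Set (G × X)) (θ : G) : X := sSup {ξ | (θ, ξ) ∈ K}

def lowerGraph (K : Set (G × X)) (θ : G) : X := sInf {ξ | (θ, ξ) ∈ K}

theorem lowerGraph_attractor_eq_upperGraph_dual {f : G × X → G × X} {a b : X} :
    lowerGraph (attractor f (univ ×ˢ Icc a b)) =
      upperGraph (X := Xᵒᵈ) (attractor f (univ ×ˢ Icc (toDual b) (toDual a))) := by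
  rw [Icc_toDual]
  rfl

end Graphs

section UpperGraph

variable {G X : Type*} [AddCommGroup G] [TopologicalSpace G]
  [ConditionallyCompleteLinearOrder X] [TopologicalSpace X] [OrderTopology X]
  {f : G × X → G × X} {ω : G} {a b : X}

theorem mem_attractor_iInf_upperIterate (hf : IsMonotoneSkewOn f ω (Icc a b))
    (hcont : Continuous f) (hab : a ≤ b) (θ : G) :
    (θ, ⨅ n, upperIterate f ω b n θ) ∈ attractor f (univ ×ˢ Icc a b) := by
  refine mem_iInter.2 fun n => ?_
  -- the fibre of `f^[n] '' (univ ×ˢ Icc a b)` over `θ` is closed and contains all later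
  -- `upperIterate f ω b m θ`, `m ≥ n`, so it contains their limit
  have hclosed : IsClosed {ξ | (θ, ξ) ∈ f^[n] '' (univ ×ˢ Icc a b)} := by
    rw [hf.fiber_iterate_image]
    exact (isCompact_Icc.image (continuous_snd.comp
      ((hcont.iterate n).comp (Continuous.prodMk_right _)))).isClosed
  refine hclosed.mem_of_tendsto (tendsto_atTop_ciInf (antitone_upperIterate hf hab θ)
    (bddBelow_range_upperIterate hf hab θ)) (eventually_atTop.2 ⟨n, fun m hmn => ?_⟩)
  exact hf.mapsTo_univ_prod.iterate_image_subset hmn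
    ⟨_, ⟨trivial, right_mem_Icc.2 hab⟩, hf.iterate_apply_sub_nsmul m θ b⟩

theorem upperGraph_attractor_eq_iInf (hf : IsMonotoneSkewOn f ω (Icc a b))
    (hcont : Continuous f) (hab : a ≤ b) (θ : G) :
    upperGraph (attractor f (univ ×ˢ Icc a b)) θ = ⨅ n, upperIterate f ω b n θ :=
  IsGreatest.csSup_eq ⟨mem_attractor_iInf_upperIterate hf hcont hab θ,
    fun _ hξ => le_ciInf fun n => le_upperIterate_of_mem hf (mem_iInter.1 hξ n)⟩

theorem tendsto_upperIterate (hf : IsMonotoneSkewOn f ω (Icc a b)) (hcont : Continuous f)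
    (hab : a ≤ b) (θ : G) :
    Tendsto (upperIterate f ω b · θ) atTop
      (𝓝 (upperGraph (attractor f (univ ×ˢ Icc a b)) θ)) := by
  rw [upperGraph_attractor_eq_iInf hf hcont hab]
  exact tendsto_atTop_ciInf (antitone_upperIterate hf hab θ)
    (bddBelow_range_upperIterate hf hab θ)

theorem upperGraph_mem_Icc (hf : IsMonotoneSkewOn f ω (Icc a b)) (hcont : Continuous f)
    (hab : a ≤ b) (θ : G) : upperGraph (attractor f (univ ×ˢ Icc a b)) θ ∈ Icc a b :=
  isClosed_Icc.mem_of_tendsto (tendsto_upperIterate hf hcont hab θ)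
    (Eventually.of_forall fun n => upperIterate_mem hf hab n θ)

theorem upperSemicontinuous_upperGraph [IsTopologicalAddGroup G]
    (hf : IsMonotoneSkewOn f ω (Icc a b)) (hcont : Continuous f) (hab : a ≤ b) :
    UpperSemicontinuous (upperGraph (attractor f (univ ×ˢ Icc a b))) := by
  rw [funext (upperGraph_attractor_eq_iInf hf hcont hab)]
  exact upperSemicontinuous_ciInf (bddBelow_range_upperIterate hf hab)
    fun n => (continuous_upperIterate hcont n).upperSemicontinuous

theorem semiconj_upperGraph (hf : IsMonotoneSkewOn f ω (Icc a b)) (hcont : Continuous f)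
    (hab : a ≤ b) :
    Semiconj (fun θ => (θ, upperGraph (attractor f (univ ×ˢ Icc a b)) θ)) (· + ω) f := by
  intro θ
  have h₁ := (tendsto_upperIterate hf hcont hab (θ + ω)).comp (tendsto_add_atTop_nat 1)
  have h₂ := ((hcont.snd.comp (Continuous.prodMk_right θ)).tendsto _).comp
    (tendsto_upperIterate hf hcont hab θ)
  rw [hf.apply_eq]
  exact Prod.ext rfl
    (tendsto_nhds_unique h₁ (h₂.congr fun n => (upperIterate_succ_add hf n θ).symm))

theorem iterate_upperGraph (hf : IsMonotoneSkewOn f ω (Icc a b)) (hcont : Continuous f)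
    (hab : a ≤ b) (n : ℕ) (θ : G) :
    f^[n] (θ, upperGraph (attractor f (univ ×ˢ Icc a b)) θ) =
      (θ + n • ω, upperGraph (attractor f (univ ×ˢ Icc a b)) (θ + n • ω)) := by
  simpa using ((semiconj_upperGraph hf hcont hab).iterate_right n θ).symm

theorem upperGraph_le_iterate_snd (hf : IsMonotoneSkewOn f ω (Icc a b)) (hcont : Continuous f)
    (hab : a ≤ b) {θ : G} {ξ : X} (hξ : ξ ∈ Icc a b)
    (h : upperGraph (attractor f (univ ×ˢ Icc a b)) θ ≤ ξ) (n : ℕ) :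
    upperGraph (attractor f (univ ×ˢ Icc a b)) (θ + n • ω) ≤ (f^[n] (θ, ξ)).2 :=
  (congrArg Prod.snd (iterate_upperGraph hf hcont hab n θ)).symm.trans_le
    ((hf.iterate n).monotoneOn θ (upperGraph_mem_Icc hf hcont hab θ) hξ h)

theorem iterate_lowerGraph (hf : IsMonotoneSkewOn f ω (Icc a b)) (hcont : Continuous f)
    (hab : a ≤ b) (n : ℕ) (θ : G) :
    f^[n] (θ, lowerGraph (attractor f (univ ×ˢ Icc a b)) θ) =
      (θ + n • ω, lowerGraph (attractor f (univ ×ˢ Icc a b)) (θ + n • ω)) := by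
  rw [lowerGraph_attractor_eq_upperGraph_dual]
  exact iterate_upperGraph hf.dual_Icc hcont (toDual_le_toDual.2 hab) n θ

theorem dense_setOf_upperGraph_eq_lowerGraph [ContinuousAdd G]
    (hd : DenseRange fun n : ℕ => n • ω) (hf : IsMonotoneSkewOn f ω (Icc a b))
    (hcont : Continuous f) (hab : a ≤ b) {θ₀ : G}
    (h : upperGraph (attractor f (univ ×ˢ Icc a b)) θ₀ =
      lowerGraph (attractor f (univ ×ˢ Icc a b)) θ₀) :
    Dense {θ | upperGraph (attractor f (univ ×ˢ Icc a b)) θ =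
      lowerGraph (attractor f (univ ×ˢ Icc a b)) θ} := by
  have horbit : DenseRange fun n : ℕ => θ₀ + n • ω :=
    (add_left_surjective θ₀).denseRange.comp hd (continuous_const_add θ₀)
  refine horbit.mono (range_subset_iff.2 fun n => ?_)
  have h' := iterate_upperGraph hf hcont hab n θ₀
  rw [h, iterate_lowerGraph hf hcont hab n θ₀] at h'
  exact (Prod.mk.inj h').2.symm

end UpperGraph

section Sensitive

variable {G X : Type*} [AddCommGroup G] [PseudoMetricSpace G] [IsTopologicalAddGroup G]
  [ConditionallyCompleteLinearOrder X] [DenselyOrdered X] [PseudoMetricSpace X] [OrderTopology X]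
  {f : G × X → G × X} {ω : G} {a b : X}

theorem exists_isSensitiveAt_of_upperGraph_lt (hd : DenseRange fun n : ℕ => n • ω)
    (hf : IsMonotoneSkewOn f ω (Icc a b)) (hcont : Continuous f) (hab : a ≤ b)
    (hnc : ¬Continuous (upperGraph (attractor f (univ ×ˢ Icc a b)))) :
    ∃ ε > 0, ∀ θ, ∀ ξ ∈ Icc a b, upperGraph (attractor f (univ ×ˢ Icc a b)) θ < ξ →
      IsSensitiveAt f ε (θ, ξ) := by
  set φ := upperGraph (attractor f (univ ×ˢ Icc a b))
  have husc := upperSemicontinuous_upperGraph hf hcont hab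
  obtain ⟨θs, c, hc, hfreq⟩ := husc.exists_frequently_lt_of_not_continuous hnc
  obtain ⟨ε, hε, hsep⟩ := exists_pos_forall_le_dist_of_lt a hc
  refine ⟨ε, hε, fun θ ξ hξ hlt δ hδ => ?_⟩
  -- `η ↦ θs - η + θ` sends `θs` to `θ` and `θ + n • ω` to `θs - n • ω`, the start of the
  -- second orbit
  set W := φ ⁻¹' Iio ξ ∩ ball θ δ
  set V := (fun η => θs - η + θ) ⁻¹' W
  have hV : IsOpen V := ((husc.isOpen_preimage ξ).inter isOpen_ball).preimage (by fun_prop)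
  obtain ⟨θ', hθ'c, hθ'V⟩ :=
    (hfreq.and_eventually (hV.mem_nhds (by simp [V, W, hlt, hδ]))).exists
  obtain ⟨m, hm⟩ := exists_lt_of_ciInf_lt (upperGraph_attractor_eq_iInf hf hcont hab θ' ▸ hθ'c)
  obtain ⟨n, hmn, hnV, hnm⟩ := hd.exists_ge_add_nsmul_mem θ m
    (hV.inter (isOpen_lt (continuous_upperIterate hcont m) continuous_const)) ⟨θ', hθ'V, hm⟩
  have hβ : θs - n • ω ∈ W := by
    have : θs - (θ + n • ω) + θ ∈ W := hnV
    rwa [show θs - (θ + n • ω) + θ = θs - n • ω by abel] at this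
  refine ⟨(θ, ξ), mem_closedBall_self hδ.le, (θs - n • ω, ξ), ?_, n, ?_⟩
  · rw [mem_closedBall, Prod.dist_eq, dist_self, max_eq_left dist_nonneg]
    exact (mem_ball.1 hβ.2).le
  · have hy : (f^[n] (θ, ξ)).2 ∈ Icc a c := ⟨((hf.iterate n).mapsTo θ hξ).1,
      ((iterate_snd_le_upperIterate hf hξ n θ).trans (antitone_upperIterate hf hab _ hmn)).trans
        hnm.le⟩
    have hz := upperGraph_le_iterate_snd hf hcont hab hξ (le_of_lt hβ.1) n
    rw [sub_add_cancel] at hz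
    exact (hsep _ hy _ hz).trans ((le_max_right _ _).trans_eq Prod.dist_eq.symm)

theorem exists_isSensitiveAt_of_lt_lowerGraph (hd : DenseRange fun n : ℕ => n • ω)
    (hf : IsMonotoneSkewOn f ω (Icc a b)) (hcont : Continuous f) (hab : a ≤ b)
    (hnc : ¬Continuous (lowerGraph (attractor f (univ ×ˢ Icc a b)))) :
    ∃ ε > 0, ∀ θ, ∀ ξ ∈ Icc a b, ξ < lowerGraph (attractor f (univ ×ˢ Icc a b)) θ →
      IsSensitiveAt f ε (θ, ξ) := by
  rw [lowerGraph_attractor_eq_upperGraph_dual] at hnc ⊢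
  -- the instance `OrderTopology Xᵒᵈ` is stated for `OrderDual`'s own topology, which agrees
  -- with the metric topology of `Xᵒᵈ` only up to unfolding
  have : OrderTopology Xᵒᵈ := inferInstanceAs (OrderTopology (OrderDual X))
  obtain ⟨ε, hε, h⟩ := exists_isSensitiveAt_of_upperGraph_lt (X := Xᵒᵈ) hd hf.dual_Icc hcont
    (toDual_le_toDual.2 hab) hnc
  exact ⟨ε, hε, fun θ ξ hξ hlt => h θ (toDual ξ) ⟨hξ.2, hξ.1⟩ hlt⟩

end Sensitive

theorem univ_prod_Icc_subset_of_isClosed {G : Type*} [TopologicalSpace G] {S : Set (G × ℝ)}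
    (hS : IsClosed S) {D : Set G} (hD : Dense D) {a b : ℝ} (hab : a < b) (g : G → ℝ)
    (h : ∀ θ ∈ D, ∀ ξ ∈ Icc a b, ξ ≠ g θ → (θ, ξ) ∈ S) : univ ×ˢ Icc a b ⊆ S := by
  have hfiber : ∀ θ ∈ D, Icc a b ⊆ {ξ | (θ, ξ) ∈ S} := fun θ hθ =>
    calc Icc a b = closure (Ioo a b) := (closure_Ioo hab.ne).symm
      _ ⊆ closure (Ioo a b ∩ {g θ}ᶜ) :=
        closure_minimal ((dense_compl_singleton _).open_subset_closure_inter isOpen_Ioo)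
          isClosed_closure
      _ ⊆ {ξ | (θ, ξ) ∈ S} :=
        closure_minimal (fun ξ hξ => h θ hθ ξ (Ioo_subset_Icc_self hξ.1) hξ.2)
          (hS.preimage (Continuous.prodMk_right θ))
  calc univ ×ˢ Icc a b = closure (D ×ˢ Icc a b) := by
        rw [closure_prod_eq, hD.closure_eq, closure_Icc]
    _ ⊆ S := closure_minimal (fun p hp => hfiber p.1 hp.1 hp.2) hS

/-- If the global attractor `𝒦 = ⋂ₙ fⁿ(𝕋¹×[a,b])` of a
quasiperiodically forced monotone interval map is pinched and its upper and lower
bounding graphs are both non-continuous, then `f` has sensitive dependence on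
initial conditions on all of `𝕋¹ × [a,b]`. -/
theorem pinched_global_attractor_sensitive
    (ω : ℝ) (hω : Irrational ω) (a b : ℝ) (hab : a ≤ b)
    (F : AddCircle (1 : ℝ) → ℝ → ℝ)
    (hFmono : ∀ θ, MonotoneOn (F θ) (Set.Icc a b))
    (hFmaps : ∀ θ, Set.MapsTo (F θ) (Set.Icc a b) (Set.Icc a b))
    (f : AddCircle (1 : ℝ) × ℝ → AddCircle (1 : ℝ) × ℝ)
    (hf : ∀ p, f p = (p.1 + (ω : AddCircle (1 : ℝ)), F p.1 p.2))
    (hcont : Continuous f)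
    (K : Set (AddCircle (1 : ℝ) × ℝ))
    (hK : K = ⋂ n : ℕ, f^[n] '' (Set.univ ×ˢ Set.Icc a b))
    (hpinch : ∃ θ : AddCircle (1 : ℝ), ∃ ξ : ℝ, {ξ' : ℝ | (θ, ξ') ∈ K} = {ξ})
    (φp φm : AddCircle (1 : ℝ) → ℝ)
    (hφp : ∀ θ, φp θ = sSup {ξ : ℝ | (θ, ξ) ∈ K})
    (hφm : ∀ θ, φm θ = sInf {ξ : ℝ | (θ, ξ) ∈ K})
    (hφpnc : ¬ Continuous φp) (hφmnc : ¬ Continuous φm) :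
    ∃ ε > 0, ∀ x ∈ Set.univ ×ˢ Set.Icc a b, ∀ δ > 0,
      ∃ y ∈ Metric.closedBall x δ, ∃ z ∈ Metric.closedBall x δ,
        ∃ n : ℕ, ε ≤ dist (f^[n] y) (f^[n] z) := by
  have hskew := IsMonotoneSkewOn.of_forall_eq hf hFmono hFmaps
  have hd := AddCircle.denseRange_nsmul_coe hω
  obtain rfl : K = attractor f (univ ×ˢ Icc a b) := hK
  obtain rfl : φp = upperGraph (attractor f (univ ×ˢ Icc a b)) := funext hφp
  obtain rfl : φm = lowerGraph (attractor f (univ ×ˢ Icc a b)) := funext hφm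
  have hab' : a < b := hab.lt_of_ne fun h => hφpnc <| continuous_const.congr fun θ =>
    have hθ := upperGraph_mem_Icc hskew hcont hab θ
    le_antisymm hθ.1 (hθ.2.trans_eq h.symm)
  obtain ⟨ε₁, hε₁, hupper⟩ := exists_isSensitiveAt_of_upperGraph_lt hd hskew hcont hab hφpnc
  obtain ⟨ε₂, hε₂, hlower⟩ := exists_isSensitiveAt_of_lt_lowerGraph hd hskew hcont hab hφmnc
  obtain ⟨θp, ξp, hθp⟩ := hpinch
  have hpinched := dense_setOf_upperGraph_eq_lowerGraph hd hskew hcont hab (θ₀ := θp)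
    (by simp only [upperGraph, lowerGraph, hθp, csSup_singleton, csInf_singleton])
  refine ⟨min ε₁ ε₂, lt_min hε₁ hε₂, univ_prod_Icc_subset_of_isClosed
    (isClosed_setOf_isSensitiveAt f _) hpinched hab' (upperGraph (attractor f (univ ×ˢ Icc a b)))
    fun θ hθ ξ hξ hne => ?_⟩
  rcases hne.lt_or_gt with hlt | hgt
  · exact (hlower θ ξ hξ (hθ ▸ hlt)).mono (min_le_right _ _)
  · exact (hupper θ ξ hξ hgt).mono (min_le_left _ _)
end
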